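/- In an SMRD design with potential-outcome matrices y(γ), for all γ ≠ γ′ in {tr, ib, is, cc}: Cov(m̂_γ, m̂_{γ′}) = η^B_{γ,γ′}·(I_C I_T/(I_γ I_{γ′}))·(1/(2I))·( ω^B(y(γ)) + ω^B(y(γ′)) − ξ^B(y(γ), y(γ′)) ) + η^S_{γ,γ′}·(J_C J_T/(J_γ J_{γ′}))·(1/(2J))·( ω^S(y(γ)) + ω^S(y(γ′)) − ξ^S(y(γ), y(γ′)) ) + η^B_{γ,γ′} η^S_{γ,γ′}·(I_C I_T J_C J_T/(I_γ J_γ I_{γ′} J_{γ′}))·(1/(2IJ))·( ω^BS(y(γ)) + ω^BS(y(γ′)) − ξ^BS(y(γ), y(γ′)) ). -/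

import Mathlib

open MeasureTheory ProbabilityTheory Finset Filter
open scoped ENNReal NNReal

noncomputable section

namespace SMRD

instance (n : ℕ) : MeasurableSpace (Finset (Fin n)) := ⊤

/-- Uniform probability measure on (the coercion to a set of) a finite set of outcomes. -/
def uniformOn {α : Type*} [MeasurableSpace α] (s : Finset α) : Measure α :=
  ((s.card : ℝ≥0∞))⁻¹ • Measure.count.restrict ↑s

/-- Sample space of an SMRD: a pair (set of treated rows, set of treated columns). -/
abbrev Omg (I J : ℕ) := Finset (Fin I) × Finset (Fin J)

/-- All admissible designs: row sets of size `IT` and column sets of size `JT`. -/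
def designSets (I J IT JT : ℕ) : Finset (Omg I J) :=
  (powersetCard IT (univ : Finset (Fin I))) ×ˢ (powersetCard JT (univ : Finset (Fin J)))

/-- The SMRD design measure: uniform over designs. -/
def smrd (I J IT JT : ℕ) : Measure (Omg I J) := uniformOn (designSets I J IT JT)

/-- Uniform measure over the row-treatment sets alone. -/
def rowMeasure (I IT : ℕ) : Measure (Finset (Fin I)) :=
  uniformOn (powersetCard IT (univ : Finset (Fin I)))

variable {I J : ℕ}

def rowMean (A : Fin I → Fin J → ℝ) (i : Fin I) : ℝ := (∑ j, A i j) / J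
def colMean (A : Fin I → Fin J → ℝ) (j : Fin J) : ℝ := (∑ i, A i j) / I
def grandMean (A : Fin I → Fin J → ℝ) : ℝ := (∑ i, ∑ j, A i j) / ((I : ℝ) * J)
/-- Double decentering. -/
def dcr (A : Fin I → Fin J → ℝ) (i : Fin I) (j : Fin J) : ℝ :=
  A i j - rowMean A i - colMean A j + grandMean A

def omegaB (A : Fin I → Fin J → ℝ) : ℝ :=
  (∑ i, (rowMean A i - grandMean A) ^ 2) / ((I : ℝ) - 1)
def omegaS (A : Fin I → Fin J → ℝ) : ℝ :=
  (∑ j, (colMean A j - grandMean A) ^ 2) / ((J : ℝ) - 1)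
def omegaBS (A : Fin I → Fin J → ℝ) : ℝ :=
  (∑ i, ∑ j, dcr A i j ^ 2) / (((I : ℝ) - 1) * ((J : ℝ) - 1))

def xiB (A A' : Fin I → Fin J → ℝ) : ℝ :=
  (∑ i, ((rowMean A i - grandMean A) - (rowMean A' i - grandMean A')) ^ 2) / ((I : ℝ) - 1)
def xiS (A A' : Fin I → Fin J → ℝ) : ℝ :=
  (∑ j, ((colMean A j - grandMean A) - (colMean A' j - grandMean A')) ^ 2) / ((J : ℝ) - 1)
def xiBS (A A' : Fin I → Fin J → ℝ) : ℝ :=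
  (∑ i, ∑ j, (dcr A i j - dcr A' i j) ^ 2) / (((I : ℝ) - 1) * ((J : ℝ) - 1))

/-- The four groups of an SMRD. -/
inductive Gp | tr | ib | is | cc
  deriving DecidableEq

instance : Fintype Gp := ⟨{Gp.tr, Gp.ib, Gp.is, Gp.cc}, fun x => by cases x <;> simp⟩

/-- Does the group use the treated rows? -/
def rowT : Gp → Bool | .tr => true | .ib => true | .is => false | .cc => false
/-- Does the group use the treated columns? -/
def colT : Gp → Bool | .tr => true | .is => true | .ib => false | .cc => false

def rowSet (ω : Omg I J) (γ : Gp) : Finset (Fin I) := if rowT γ then ω.1 else ω.1ᶜ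
def colSet (ω : Omg I J) (γ : Gp) : Finset (Fin J) := if colT γ then ω.2 else ω.2ᶜ

/-- Deterministic group row size (as a real number). -/
def IszR (I IT : ℕ) (γ : Gp) : ℝ := if rowT γ then (IT : ℝ) else (I : ℝ) - IT
/-- Deterministic group column size (as a real number). -/
def JszR (J JT : ℕ) (γ : Gp) : ℝ := if colT γ then (JT : ℝ) else (J : ℝ) - JT

/-- Sign η^B. -/
def etaB (γ γ' : Gp) : ℝ := if rowT γ = rowT γ' then 1 else -1
/-- Sign η^S. -/
def etaS (γ γ' : Gp) : ℝ := if colT γ = colT γ' then 1 else -1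

/-- Group-mean estimator m̂_γ. -/
def mhat (y : Gp → Fin I → Fin J → ℝ) (γ : Gp) (ω : Omg I J) : ℝ :=
  (∑ i ∈ rowSet ω γ, ∑ j ∈ colSet ω γ, y γ i j) /
    (((rowSet ω γ).card : ℝ) * ((colSet ω γ).card : ℝ))

/-- Covariance of two real random variables. -/
def cov {α : Type*} [MeasurableSpace α] (μ : Measure α) (f g : α → ℝ) : ℝ :=
  ∫ ω, (f ω - ∫ x, f x ∂μ) * (g ω - ∫ x, g x ∂μ) ∂μ

/-- 1-Wasserstein distance between Borel measures on ℝ (infimum over couplings). -/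
def wassersteinDist (μ ν : Measure ℝ) : ℝ≥0∞ :=
  ⨅ (π : Measure (ℝ × ℝ)) (_ : π.map Prod.fst = μ) (_ : π.map Prod.snd = ν),
    ∫⁻ p, ENNReal.ofReal |p.1 - p.2| ∂π

/-- Spectral (ℓ²→ℓ² operator) norm of an I×J matrix. -/
def opNorm (A : Fin I → Fin J → ℝ) : ℝ :=
  ‖LinearMap.toContinuousLinearMap (Matrix.toEuclideanLin (Matrix.of A))‖

/-- Indicator W_i^B. -/
def WB (ω : Omg I J) (i : Fin I) : ℝ := if i ∈ ω.1 then 1 else 0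
/-- Indicator W_j^S. -/
def WS (ω : Omg I J) (j : Fin J) : ℝ := if j ∈ ω.2 then 1 else 0

/-- Within-group row mean Â_{i,•}(γ) (with column index set `Cs`). -/
def rowHat (A : Fin I → Fin J → ℝ) (Cs : Finset (Fin J)) (i : Fin I) : ℝ :=
  (∑ j ∈ Cs, A i j) / (Cs.card : ℝ)
/-- Within-group column mean Â_{•,j}(γ). -/
def colHat (A : Fin I → Fin J → ℝ) (Rs : Finset (Fin I)) (j : Fin J) : ℝ :=
  (∑ i ∈ Rs, A i j) / (Rs.card : ℝ)
/-- Within-group grand mean m̂_γ(A). -/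
def gHat (A : Fin I → Fin J → ℝ) (Rs : Finset (Fin I)) (Cs : Finset (Fin J)) : ℝ :=
  (∑ i ∈ Rs, ∑ j ∈ Cs, A i j) / ((Rs.card : ℝ) * (Cs.card : ℝ))

/-- Empirical within-group covariance of row means. -/
def empRowCov (A B : Fin I → Fin J → ℝ) (γ : Gp) (ω : Omg I J) : ℝ :=
  (∑ i ∈ rowSet ω γ,
      (rowHat A (colSet ω γ) i - gHat A (rowSet ω γ) (colSet ω γ)) *
        (rowHat B (colSet ω γ) i - gHat B (rowSet ω γ) (colSet ω γ))) /
    ((rowSet ω γ).card : ℝ)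

/-- Empirical within-group covariance of column means. -/
def empColCov (A B : Fin I → Fin J → ℝ) (γ : Gp) (ω : Omg I J) : ℝ :=
  (∑ j ∈ colSet ω γ,
      (colHat A (rowSet ω γ) j - gHat A (rowSet ω γ) (colSet ω γ)) *
        (colHat B (rowSet ω γ) j - gHat B (rowSet ω γ) (colSet ω γ))) /
    ((colSet ω γ).card : ℝ)

/-- Empirical within-group covariance of doubly-decentered entries. -/
def empDcrCov (A B : Fin I → Fin J → ℝ) (γ : Gp) (ω : Omg I J) : ℝ :=
  (∑ i ∈ rowSet ω γ, ∑ j ∈ colSet ω γ,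
      (A i j - rowHat A (colSet ω γ) i - colHat A (rowSet ω γ) j +
          gHat A (rowSet ω γ) (colSet ω γ)) *
        (B i j - rowHat B (colSet ω γ) i - colHat B (rowSet ω γ) j +
          gHat B (rowSet ω γ) (colSet ω γ))) /
    (((rowSet ω γ).card : ℝ) * ((colSet ω γ).card : ℝ))

def popRowCov (A B : Fin I → Fin J → ℝ) : ℝ :=
  (∑ i, (rowMean A i - grandMean A) * (rowMean B i - grandMean B)) / (I : ℝ)
def popColCov (A B : Fin I → Fin J → ℝ) : ℝ :=
  (∑ j, (colMean A j - grandMean A) * (colMean B j - grandMean B)) / (J : ℝ)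
def popDcrCov (A B : Fin I → Fin J → ℝ) : ℝ :=
  (∑ i, ∑ j, dcr A i j * dcr B i j) / ((I : ℝ) * (J : ℝ))

/-!
Write `A i j = μ + α i + β j + ρ i j` with `α`, `β` centred and `ρ` doubly centred (`rowEffect`,
`colEffect`, `dcr`). A centred vector sums to minus itself over the complement of a set, so on
every design `(R, C)` the centred estimator `m̂_γ - μ_γ` is
`±(1/I_γ) Σ_{i∈R} α i ± (1/J_γ) Σ_{j∈C} β j ± (1/(I_γ J_γ)) Σ_{R×C} ρ i j`, with the signs given
by whether `γ` uses `R` or its complement. For a uniform `k`-subset `R` of an `n`-set and centred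
`f`, `Σ_{i∈R} f i` has mean zero and `E[(Σ_{i∈R} f i)(Σ_{i∈R} g i)] = k(n-k)/(n(n-1)) Σ f g`.
Applying this over the rows for fixed `C` and then over the columns kills all cross terms, and the
three surviving products are the three terms of the covariance.
-/

lemma integral_uniformOn {α : Type*} [MeasurableSpace α] [MeasurableSingletonClass α] [Finite α]
    (s : Finset α) (f : α → ℝ) :
    ∫ x, f x ∂(uniformOn s) = (∑ x ∈ s, f x) / #s := by
  rw [uniformOn, integral_smul_measure, setIntegral_finset s (Integrable.of_finite ..)]
  simp [div_eq_inv_mul, mul_sum]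

section Sampling

lemma card_filter_mem_powersetCard_succ {α : Type*} [DecidableEq α] {s : Finset α} {i : α}
    (hi : i ∈ s) (k : ℕ) :
    #{R ∈ powersetCard (k + 1) s | i ∈ R} = (#s - 1).choose k := by
  simpa using card_filter_powersetCard_subset {i} s (k + 1) (by simpa using hi) (by simp)

variable {α : Type*} [Fintype α] [DecidableEq α]

lemma sum_compl_eq_neg {f : α → ℝ} (hf : ∑ i, f i = 0) (s : Finset α) :
    ∑ i ∈ sᶜ, f i = -∑ i ∈ s, f i := by
  rw [eq_neg_iff_add_eq_zero, sum_compl_add_sum, hf]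

lemma sum_sum_mem_eq_sum_card_filter_mul (S : Finset (Finset α)) (f : α → ℝ) :
    ∑ R ∈ S, ∑ i ∈ R, f i = ∑ i, #{R ∈ S | i ∈ R} * f i := by
  rw [sum_comm' (t' := univ) (s' := fun i => {R ∈ S | i ∈ R}) (by simp)]
  simp

lemma sum_powersetCard_sum_eq_zero {f : α → ℝ} (hf : ∑ i, f i = 0) (k : ℕ) :
    ∑ R ∈ powersetCard k univ, ∑ i ∈ R, f i = 0 := by
  rcases k with _ | k
  · simp
  · simp [sum_sum_mem_eq_sum_card_filter_mul, card_filter_mem_powersetCard_succ, ← mul_sum, hf]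

lemma card_filter_notMem_mem_powersetCard_succ (i i' : α) (k : ℕ) :
    #{R ∈ powersetCard (k + 1) univ | i ∉ R ∧ i' ∈ R} =
      if i' = i then 0 else (Fintype.card α - 2).choose k := by
  split_ifs with h
  · simp [h]
  · have hfilter : {R ∈ powersetCard (k + 1) (univ : Finset α) | i ∉ R ∧ i' ∈ R} =
        {R ∈ powersetCard (k + 1) (univ.erase i) | i' ∈ R} := by
      ext R
      simp only [mem_filter, mem_powersetCard, subset_erase]
      tauto
    rw [hfilter, card_filter_mem_powersetCard_succ (s := univ.erase i) (by simpa using h),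
      card_erase_of_mem (mem_univ i), card_univ]
    rfl

/-- Writing `Σ_{i∈R} f i = -Σ_{i∉R} f i` turns the product into a sum over pairs `i ∉ R ∋ i'`,
and each pair with `i ≠ i'` is counted by the same number of `k`-subsets. -/
lemma sum_powersetCard_sum_mul_sum {f : α → ℝ} (hf : ∑ i, f i = 0) (g : α → ℝ) {k : ℕ}
    (hk : 1 ≤ k) :
    ∑ R ∈ powersetCard k univ, (∑ i ∈ R, f i) * (∑ i ∈ R, g i) =
      (Fintype.card α - 2).choose (k - 1) * ∑ i, f i * g i := by
  obtain ⟨k, rfl⟩ := Nat.exists_eq_add_of_le' hk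
  calc ∑ R ∈ powersetCard (k + 1) univ, (∑ i ∈ R, f i) * (∑ i ∈ R, g i)
      = -∑ R ∈ powersetCard (k + 1) univ, ∑ i ∈ Rᶜ, ∑ i' ∈ R, f i * g i' := by
        rw [← sum_neg_distrib]
        refine sum_congr rfl fun R _ => ?_
        rw [← neg_neg (∑ i ∈ R, f i), ← sum_compl_eq_neg hf, neg_mul, sum_mul_sum]
    _ = -∑ i, ∑ R ∈ powersetCard (k + 1) univ with i ∉ R, ∑ i' ∈ R, f i * g i' := by
        rw [sum_comm' (t' := univ) (s' := fun i => {R ∈ powersetCard (k + 1) univ | i ∉ R})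
          (by simp)]
    _ = -∑ i, ∑ i', (if i' = i then 0 else ((Fintype.card α - 2).choose k : ℝ)) * (f i * g i') := by
        simp only [sum_sum_mem_eq_sum_card_filter_mul, filter_filter,
          card_filter_notMem_mem_powersetCard_succ]
        push_cast
        rfl
    _ = (Fintype.card α - 2).choose k * ∑ i, f i * g i := by
        have hsplit (c x : ℝ) (i i' : α) :
            (if i' = i then 0 else c) * x = c * x - if i' = i then c * x else 0 := by
          split_ifs <;> ring
        simp [hsplit, sum_sub_distrib, ← mul_sum, ← sum_mul, hf]

def samplingFactor (n k : ℕ) : ℝ := k * (n - k) / (n * (n - 1))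

lemma choose_sub_two_eq_choose_mul_samplingFactor {n k : ℕ} (hn : 2 ≤ n) (hk : 1 ≤ k) :
    ((n - 2).choose (k - 1) : ℝ) = n.choose k * samplingFactor n k := by
  obtain ⟨m, rfl⟩ := Nat.exists_eq_add_of_le' hn
  obtain ⟨j, rfl⟩ := Nat.exists_eq_add_of_le' hk
  rcases lt_or_ge (m + 2) (j + 1) with hlt | hle
  · simp [Nat.choose_eq_zero_of_lt hlt, Nat.choose_eq_zero_of_lt (by omega : m < j)]
  have h1 : ((m + 1 : ℕ) : ℝ) * m.choose j = (m + 1).choose (j + 1) * (j + 1 : ℕ) := by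
    exact_mod_cast Nat.add_one_mul_choose_eq m j
  have h2 : ((m + 1).choose (j + 1) : ℝ) * (m + 2 : ℕ) =
      (m + 2).choose (j + 1) * (m + 1 - j : ℕ) := by
    have h := Nat.choose_mul_succ_eq (m + 1) (j + 1)
    rw [show m + 1 + 1 - (j + 1) = m + 1 - j by omega] at h
    exact_mod_cast h
  rw [Nat.cast_sub (by omega)] at h2
  simp only [samplingFactor, Nat.add_sub_cancel]
  push_cast at h1 h2 ⊢
  rw [show (m : ℝ) + 2 - 1 = m + 1 by ring]
  field_simp
  linear_combination (m + 2 : ℝ) * h1 + (j + 1 : ℝ) * h2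

lemma sum_powersetCard_add_sum_mul_add_sum {f g : α → ℝ} (hf : ∑ i, f i = 0)
    (hg : ∑ i, g i = 0) (hα : 2 ≤ Fintype.card α) (β β' : ℝ) (k : ℕ) :
    ∑ R ∈ powersetCard k univ, (β + ∑ i ∈ R, f i) * (β' + ∑ i ∈ R, g i) =
      (Fintype.card α).choose k *
        (β * β' + samplingFactor (Fintype.card α) k * ∑ i, f i * g i) := by
  rcases Nat.eq_zero_or_pos k with rfl | hk
  · simp [samplingFactor]
  have hexpand (R : Finset α) : (β + ∑ i ∈ R, f i) * (β' + ∑ i ∈ R, g i) =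
      β * β' + β * ∑ i ∈ R, g i + β' * ∑ i ∈ R, f i + (∑ i ∈ R, f i) * (∑ i ∈ R, g i) := by
    ring
  simp only [hexpand, sum_add_distrib, ← mul_sum, sum_powersetCard_sum_eq_zero hf,
    sum_powersetCard_sum_eq_zero hg, sum_powersetCard_sum_mul_sum hf g hk,
    choose_sub_two_eq_choose_mul_samplingFactor hα hk, sum_const, card_powersetCard, card_univ,
    nsmul_eq_mul]
  ring

end Sampling

def rowEffect (A : Fin I → Fin J → ℝ) (i : Fin I) : ℝ := rowMean A i - grandMean A
def colEffect (A : Fin I → Fin J → ℝ) (j : Fin J) : ℝ := colMean A j - grandMean A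

lemma sum_rowEffect (A : Fin I → Fin J → ℝ) : ∑ i, rowEffect A i = 0 := by
  obtain rfl | hI := eq_or_ne I 0
  · simp
  simp only [rowEffect, rowMean, grandMean, sum_sub_distrib, ← sum_div, sum_const, card_univ,
    Fintype.card_fin, nsmul_eq_mul]
  field_simp
  ring

lemma sum_colEffect (A : Fin I → Fin J → ℝ) : ∑ j, colEffect A j = 0 := by
  obtain rfl | hJ := eq_or_ne J 0
  · simp
  simp only [colEffect, colMean, grandMean, sum_sub_distrib, ← sum_div, sum_const, card_univ,
    Fintype.card_fin, nsmul_eq_mul]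
  rw [sum_comm]
  field_simp
  ring

lemma sum_dcr_right (A : Fin I → Fin J → ℝ) (i : Fin I) : ∑ j, dcr A i j = 0 := by
  obtain rfl | hJ := eq_or_ne J 0
  · simp
  simp only [dcr, rowMean, colMean, grandMean, sum_add_distrib, sum_sub_distrib, ← sum_div,
    sum_const, card_univ, Fintype.card_fin, nsmul_eq_mul]
  rw [sum_comm (s := univ) (t := univ) (f := fun i j => A i j)]
  field_simp
  ring

lemma sum_dcr_left (A : Fin I → Fin J → ℝ) (j : Fin J) : ∑ i, dcr A i j = 0 := by
  obtain rfl | hI := eq_or_ne I 0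
  · simp
  simp only [dcr, rowMean, colMean, grandMean, sum_add_distrib, sum_sub_distrib, ← sum_div,
    sum_const, card_univ, Fintype.card_fin, nsmul_eq_mul]
  field_simp
  ring

lemma sum_sum_eq_anova (A : Fin I → Fin J → ℝ) (R : Finset (Fin I)) (C : Finset (Fin J)) :
    ∑ i ∈ R, ∑ j ∈ C, A i j =
      #R * #C * grandMean A + #C * ∑ i ∈ R, rowEffect A i + #R * ∑ j ∈ C, colEffect A j +
        ∑ i ∈ R, ∑ j ∈ C, dcr A i j := by
  have hA (i : Fin I) (j : Fin J) :
      A i j = grandMean A + rowEffect A i + colEffect A j + dcr A i j := by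
    simp only [rowEffect, colEffect, dcr]; ring
  simp only [hA, sum_add_distrib, sum_const, nsmul_eq_mul, ← mul_sum]
  ring

def rowSign (γ : Gp) : ℝ := if rowT γ then 1 else -1
def colSign (γ : Gp) : ℝ := if colT γ then 1 else -1

lemma etaB_eq_rowSign_mul (γ γ' : Gp) : etaB γ γ' = rowSign γ * rowSign γ' := by
  unfold etaB rowSign
  cases rowT γ <;> cases rowT γ' <;> norm_num

lemma etaS_eq_colSign_mul (γ γ' : Gp) : etaS γ γ' = colSign γ * colSign γ' := by
  unfold etaS colSign
  cases colT γ <;> cases colT γ' <;> norm_num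

lemma sum_rowSet {f : Fin I → ℝ} (hf : ∑ i, f i = 0) (ω : Omg I J) (γ : Gp) :
    ∑ i ∈ rowSet ω γ, f i = rowSign γ * ∑ i ∈ ω.1, f i := by
  unfold rowSet rowSign
  cases rowT γ <;> simp [sum_compl_eq_neg hf]

lemma sum_colSet {f : Fin J → ℝ} (hf : ∑ j, f j = 0) (ω : Omg I J) (γ : Gp) :
    ∑ j ∈ colSet ω γ, f j = colSign γ * ∑ j ∈ ω.2, f j := by
  unfold colSet colSign
  cases colT γ <;> simp [sum_compl_eq_neg hf]

lemma sum_rowSet_sum_colSet_dcr (A : Fin I → Fin J → ℝ) (ω : Omg I J) (γ : Gp) :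
    ∑ i ∈ rowSet ω γ, ∑ j ∈ colSet ω γ, dcr A i j =
      rowSign γ * colSign γ * ∑ i ∈ ω.1, ∑ j ∈ ω.2, dcr A i j := by
  have hrow : ∑ i, ∑ j ∈ ω.2, dcr A i j = 0 := by
    rw [sum_comm]
    exact sum_eq_zero fun j _ => sum_dcr_left A j
  simp only [sum_colSet (sum_dcr_right A _), ← mul_sum, sum_rowSet hrow]
  ring

lemma card_rowSet {IT : ℕ} {ω : Omg I J} (hω : #ω.1 = IT) (γ : Gp) :
    (#(rowSet ω γ) : ℝ) = IszR I IT γ := by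
  have hle : IT ≤ I := by simpa [hω] using card_le_univ ω.1
  unfold rowSet IszR
  cases rowT γ <;> simp [card_compl, hω, Nat.cast_sub hle]

lemma card_colSet {JT : ℕ} {ω : Omg I J} (hω : #ω.2 = JT) (γ : Gp) :
    (#(colSet ω γ) : ℝ) = JszR J JT γ := by
  have hle : JT ≤ J := by simpa [hω] using card_le_univ ω.2
  unfold colSet JszR
  cases colT γ <;> simp [card_compl, hω, Nat.cast_sub hle]

def anovaStat (A : Fin I → Fin J → ℝ) (u v : ℝ) (ω : Omg I J) : ℝ :=
  u * ∑ i ∈ ω.1, rowEffect A i + v * ∑ j ∈ ω.2, colEffect A j +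
    u * v * ∑ i ∈ ω.1, ∑ j ∈ ω.2, dcr A i j

lemma mhat_eq_grandMean_add_anovaStat {IT JT : ℕ} (y : Gp → Fin I → Fin J → ℝ) (γ : Gp)
    {ω : Omg I J} (hR : #ω.1 = IT) (hC : #ω.2 = JT) (hI : IszR I IT γ ≠ 0)
    (hJ : JszR J JT γ ≠ 0) :
    mhat y γ ω = grandMean (y γ) +
      anovaStat (y γ) (rowSign γ / IszR I IT γ) (colSign γ / JszR J JT γ) ω := by
  rw [mhat, sum_sum_eq_anova, card_rowSet hR, card_colSet hC, sum_rowSet (sum_rowEffect _),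
    sum_colSet (sum_colEffect _), sum_rowSet_sum_colSet_dcr, anovaStat]
  field_simp
  ring

lemma mem_designSets {IT JT : ℕ} {ω : Omg I J} :
    ω ∈ designSets I J IT JT ↔ #ω.1 = IT ∧ #ω.2 = JT := by
  simp [designSets]

lemma card_designSets (IT JT : ℕ) : #(designSets I J IT JT) = I.choose IT * J.choose JT := by
  simp [designSets, card_powersetCard]

lemma integral_smrd (IT JT : ℕ) (f : Omg I J → ℝ) :
    ∫ ω, f ω ∂(smrd I J IT JT) =
      (∑ ω ∈ designSets I J IT JT, f ω) / (I.choose IT * J.choose JT) := by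
  rw [smrd, integral_uniformOn, card_designSets, Nat.cast_mul]

lemma anovaStat_eq (A : Fin I → Fin J → ℝ) (u v : ℝ) (R : Finset (Fin I)) (C : Finset (Fin J)) :
    anovaStat A u v (R, C) =
      v * ∑ j ∈ C, colEffect A j + ∑ i ∈ R, (u * rowEffect A i + u * v * ∑ j ∈ C, dcr A i j) := by
  simp only [anovaStat, sum_add_distrib, ← mul_sum]
  ring

lemma sum_rowEffect_add_sum_dcr (A : Fin I → Fin J → ℝ) (u w : ℝ) (C : Finset (Fin J)) :
    ∑ i, (u * rowEffect A i + w * ∑ j ∈ C, dcr A i j) = 0 := by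
  rw [sum_add_distrib, ← mul_sum, ← mul_sum, sum_rowEffect, sum_comm]
  simp [sum_dcr_left]

lemma sum_designSets_anovaStat (IT JT : ℕ) (A : Fin I → Fin J → ℝ) (u v : ℝ) :
    ∑ ω ∈ designSets I J IT JT, anovaStat A u v ω = 0 := by
  rw [designSets, sum_product, sum_comm]
  have hrows (C : Finset (Fin J)) :
      ∑ R ∈ powersetCard IT univ, anovaStat A u v (R, C) =
        #(powersetCard IT (univ : Finset (Fin I))) * v * ∑ j ∈ C, colEffect A j := by
    rw [sum_congr rfl fun R _ => anovaStat_eq A u v R C, sum_add_distrib,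
      sum_powersetCard_sum_eq_zero (sum_rowEffect_add_sum_dcr A u _ C), sum_const, nsmul_eq_mul]
    ring
  rw [sum_congr rfl fun C _ => hrows C, ← mul_sum, sum_powersetCard_sum_eq_zero (sum_colEffect A),
    mul_zero]

lemma sum_designSets_anovaStat_mul {IT JT : ℕ} (hI : 2 ≤ I) (hJ : 2 ≤ J)
    (A A' : Fin I → Fin J → ℝ) (u v u' v' : ℝ) :
    ∑ ω ∈ designSets I J IT JT, anovaStat A u v ω * anovaStat A' u' v' ω =
      I.choose IT * J.choose JT *
        (u * u' * samplingFactor I IT * ∑ i, rowEffect A i * rowEffect A' i +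
          v * v' * samplingFactor J JT * ∑ j, colEffect A j * colEffect A' j +
          u * u' * v * v' * samplingFactor I IT * samplingFactor J JT *
            ∑ i, ∑ j, dcr A i j * dcr A' i j) := by
  have hI' : 2 ≤ Fintype.card (Fin I) := by simpa using hI
  have hJ' : 2 ≤ Fintype.card (Fin J) := by simpa using hJ
  have hcols : ∑ C ∈ powersetCard JT univ, (∑ j ∈ C, colEffect A j) * ∑ j ∈ C, colEffect A' j =
      J.choose JT * (samplingFactor J JT * ∑ j, colEffect A j * colEffect A' j) := by
    simpa using sum_powersetCard_add_sum_mul_add_sum (sum_colEffect A) (sum_colEffect A') hJ' 0 0 JT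
  have hdcr (i : Fin I) : ∑ C ∈ powersetCard JT univ,
      (u * rowEffect A i + u * v * ∑ j ∈ C, dcr A i j) *
        (u' * rowEffect A' i + u' * v' * ∑ j ∈ C, dcr A' i j) =
      J.choose JT * (u * rowEffect A i * (u' * rowEffect A' i) +
        samplingFactor J JT * ∑ j, u * v * dcr A i j * (u' * v' * dcr A' i j)) := by
    have h := sum_powersetCard_add_sum_mul_add_sum (f := fun j => u * v * dcr A i j)
      (g := fun j => u' * v' * dcr A' i j) (by rw [← mul_sum, sum_dcr_right, mul_zero])
      (by rw [← mul_sum, sum_dcr_right, mul_zero]) hJ' (u * rowEffect A i) (u' * rowEffect A' i) JT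
    simpa only [← mul_sum, Fintype.card_fin] using h
  rw [designSets, sum_product, sum_comm]
  simp only [anovaStat_eq, sum_powersetCard_add_sum_mul_add_sum
    (sum_rowEffect_add_sum_dcr A u _ _) (sum_rowEffect_add_sum_dcr A' u' _ _) hI', Fintype.card_fin]
  rw [← mul_sum, sum_add_distrib, ← mul_sum, sum_comm]
  simp only [hdcr, mul_mul_mul_comm v, mul_mul_mul_comm u, mul_mul_mul_comm (u * v), ← mul_sum,
    sum_add_distrib, hcols]
  ring

lemma IszR_ne_zero {IT : ℕ} (h₀ : 0 < IT) (h : IT < I) (γ : Gp) : IszR I IT γ ≠ 0 := by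
  have : (IT : ℝ) < I := by exact_mod_cast h
  unfold IszR
  split_ifs <;> positivity

lemma JszR_ne_zero {JT : ℕ} (h₀ : 0 < JT) (h : JT < J) (γ : Gp) : JszR J JT γ ≠ 0 := by
  have : (JT : ℝ) < J := by exact_mod_cast h
  unfold JszR
  split_ifs <;> positivity

lemma mhat_eq_of_mem_designSets {IT JT : ℕ} (hIT₀ : 0 < IT) (hIT : IT < I) (hJT₀ : 0 < JT)
    (hJT : JT < J) (y : Gp → Fin I → Fin J → ℝ) (γ : Gp) {ω : Omg I J}
    (hω : ω ∈ designSets I J IT JT) :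
    mhat y γ ω = grandMean (y γ) +
      anovaStat (y γ) (rowSign γ / IszR I IT γ) (colSign γ / JszR J JT γ) ω :=
  mhat_eq_grandMean_add_anovaStat y γ (mem_designSets.1 hω).1 (mem_designSets.1 hω).2
    (IszR_ne_zero hIT₀ hIT γ) (JszR_ne_zero hJT₀ hJT γ)

lemma choose_mul_choose_ne_zero {IT JT : ℕ} (hIT : IT ≤ I) (hJT : JT ≤ J) :
    (I.choose IT * J.choose JT : ℝ) ≠ 0 := by
  have := Nat.choose_pos hIT
  have := Nat.choose_pos hJT
  positivity

lemma integral_mhat {IT JT : ℕ} (hIT₀ : 0 < IT) (hIT : IT < I) (hJT₀ : 0 < JT) (hJT : JT < J)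
    (y : Gp → Fin I → Fin J → ℝ) (γ : Gp) :
    ∫ ω, mhat y γ ω ∂(smrd I J IT JT) = grandMean (y γ) := by
  rw [integral_smrd, sum_congr rfl fun ω hω => mhat_eq_of_mem_designSets hIT₀ hIT hJT₀ hJT y γ hω,
    sum_add_distrib, sum_designSets_anovaStat, sum_const, card_designSets, nsmul_eq_mul, add_zero,
    Nat.cast_mul, mul_div_cancel_left₀ _ (choose_mul_choose_ne_zero hIT.le hJT.le)]

lemma cov_mhat {IT JT : ℕ} (hIT₀ : 0 < IT) (hIT : IT < I) (hJT₀ : 0 < JT) (hJT : JT < J)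
    (y : Gp → Fin I → Fin J → ℝ) (γ γ' : Gp) :
    cov (smrd I J IT JT) (mhat y γ) (mhat y γ') =
      etaB γ γ' / (IszR I IT γ * IszR I IT γ') * samplingFactor I IT *
          ∑ i, rowEffect (y γ) i * rowEffect (y γ') i +
        etaS γ γ' / (JszR J JT γ * JszR J JT γ') * samplingFactor J JT *
          ∑ j, colEffect (y γ) j * colEffect (y γ') j +
        etaB γ γ' * etaS γ γ' / (IszR I IT γ * JszR J JT γ * IszR I IT γ' * JszR J JT γ') *
          samplingFactor I IT * samplingFactor J JT * ∑ i, ∑ j, dcr (y γ) i j * dcr (y γ') i j := by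
  have hmhat := mhat_eq_of_mem_designSets hIT₀ hIT hJT₀ hJT y
  rw [cov, integral_mhat hIT₀ hIT hJT₀ hJT, integral_mhat hIT₀ hIT hJT₀ hJT, integral_smrd,
    sum_congr rfl fun ω hω => by rw [hmhat γ hω, hmhat γ' hω, add_sub_cancel_left,
      add_sub_cancel_left],
    sum_designSets_anovaStat_mul (by omega) (by omega),
    mul_div_cancel_left₀ _ (choose_mul_choose_ne_zero hIT.le hJT.le),
    etaB_eq_rowSign_mul, etaS_eq_colSign_mul]
  ring

lemma omegaB_add_omegaB_sub_xiB (A A' : Fin I → Fin J → ℝ) :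
    omegaB A + omegaB A' - xiB A A' = 2 * (∑ i, rowEffect A i * rowEffect A' i) / (I - 1) := by
  rw [omegaB, omegaB, xiB, ← add_div, ← sub_div, ← sum_add_distrib, ← sum_sub_distrib, mul_sum]
  congr 1
  exact sum_congr rfl fun i _ => by rw [rowEffect, rowEffect]; ring

lemma omegaS_add_omegaS_sub_xiS (A A' : Fin I → Fin J → ℝ) :
    omegaS A + omegaS A' - xiS A A' = 2 * (∑ j, colEffect A j * colEffect A' j) / (J - 1) := by
  rw [omegaS, omegaS, xiS, ← add_div, ← sub_div, ← sum_add_distrib, ← sum_sub_distrib, mul_sum]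
  congr 1
  exact sum_congr rfl fun j _ => by rw [colEffect, colEffect]; ring

lemma omegaBS_add_omegaBS_sub_xiBS (A A' : Fin I → Fin J → ℝ) :
    omegaBS A + omegaBS A' - xiBS A A' =
      2 * (∑ i, ∑ j, dcr A i j * dcr A' i j) / ((I - 1) * (J - 1)) := by
  rw [omegaBS, omegaBS, xiBS, ← add_div, ← sub_div, ← sum_add_distrib, ← sum_sub_distrib, mul_sum]
  congr 1
  refine sum_congr rfl fun i _ => ?_
  rw [← sum_add_distrib, ← sum_sub_distrib, mul_sum]
  exact sum_congr rfl fun j _ => by ring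

theorem stmt8_general (I J IT JT : ℕ)
    (hIT1 : 1 ≤ IT) (hIT2 : IT ≤ I - 1) (hJT1 : 1 ≤ JT) (hJT2 : JT ≤ J - 1)
    (y : Gp → Fin I → Fin J → ℝ) (γ γ' : Gp) :
    cov (smrd I J IT JT) (mhat y γ) (mhat y γ') =
      etaB γ γ' * ((((I : ℝ) - IT) * IT) / (IszR I IT γ * IszR I IT γ')) * (1 / (2 * I)) *
          (omegaB (y γ) + omegaB (y γ') - xiB (y γ) (y γ')) +
        etaS γ γ' * ((((J : ℝ) - JT) * JT) / (JszR J JT γ * JszR J JT γ')) * (1 / (2 * J)) *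
          (omegaS (y γ) + omegaS (y γ') - xiS (y γ) (y γ')) +
        etaB γ γ' * etaS γ γ' *
          ((((I : ℝ) - IT) * IT * ((J : ℝ) - JT) * JT) /
            (IszR I IT γ * JszR J JT γ * IszR I IT γ' * JszR J JT γ')) *
          (1 / (2 * (I : ℝ) * J)) *
          (omegaBS (y γ) + omegaBS (y γ') - xiBS (y γ) (y γ')) := by
  rw [cov_mhat (by omega) (by omega) (by omega) (by omega), omegaB_add_omegaB_sub_xiB,
    omegaS_add_omegaS_sub_xiS, omegaBS_add_omegaBS_sub_xiBS]
  simp only [samplingFactor, div_eq_mul_inv, mul_inv]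
  ring

/-- Exact covariance between two distinct group-mean estimators. -/
theorem stmt8 (I J IT JT : ℕ) (hI : 2 ≤ I) (hJ : 2 ≤ J)
    (hIT1 : 1 ≤ IT) (hIT2 : IT ≤ I - 1) (hJT1 : 1 ≤ JT) (hJT2 : JT ≤ J - 1)
    (y : Gp → Fin I → Fin J → ℝ) (γ γ' : Gp) (hne : γ ≠ γ') :
    cov (smrd I J IT JT) (mhat y γ) (mhat y γ') =
      etaB γ γ' * ((((I : ℝ) - IT) * IT) / (IszR I IT γ * IszR I IT γ')) * (1 / (2 * I)) *
          (omegaB (y γ) + omegaB (y γ') - xiB (y γ) (y γ')) +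
        etaS γ γ' * ((((J : ℝ) - JT) * JT) / (JszR J JT γ * JszR J JT γ')) * (1 / (2 * J)) *
          (omegaS (y γ) + omegaS (y γ') - xiS (y γ) (y γ')) +
        etaB γ γ' * etaS γ γ' *
          ((((I : ℝ) - IT) * IT * ((J : ℝ) - JT) * JT) /
            (IszR I IT γ * JszR J JT γ * IszR I IT γ' * JszR J JT γ')) *
          (1 / (2 * (I : ℝ) * J)) *
          (omegaBS (y γ) + omegaBS (y γ') - xiBS (y γ) (y γ')) :=
  stmt8_general I J IT JT hIT1 hIT2 hJT1 hJT2 y γ γ'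

end SMRD

end
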